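/- Exactness of the global extended-rational Arnoldi approximation: under the hypotheses that the exactness identity P(A^j q_m(A)^{-1}V̂) = V(T^j (V^T◇(q_m(A)^{-1}V̂)) ⊗ I_p) holds for 0 ≤ j ≤ 2m and that A^j q_m(A)^{-1} V̂ lies in span{V_1,...,V_{2m}} for 0 ≤ j ≤ 2m−1, every rational function r(z) = p(z)/q_m(z) with deg p ≤ 2m−1 satisfies r(A)V̂ = ‖V̂‖_F · V(r(T) e_1 ⊗ I_p). -/

import Mathlib

open Matrix BigOperators Polynomial

/-- Frobenius inner product `⟨X,Y⟩_F = trace(Yᵀ X)`. -/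
noncomputable def finner {n p : ℕ} (X Y : Matrix (Fin n) (Fin p) ℝ) : ℝ :=
  Matrix.trace (Yᵀ * X)

/-- Frobenius norm. -/
noncomputable def fnorm {n p : ℕ} (X : Matrix (Fin n) (Fin p) ℝ) : ℝ :=
  Real.sqrt (finner X X)

/-- The F-orthogonal projection `P(X) = ∑ i, ⟨X, V i⟩_F • V i`. -/
noncomputable def Pproj {n p s : ℕ} (V : Fin s → Matrix (Fin n) (Fin p) ℝ)
    (X : Matrix (Fin n) (Fin p) ℝ) : Matrix (Fin n) (Fin p) ℝ :=
  ∑ i, finner X (V i) • V i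

/-!
The projection `P` fixes `span {Vᵢ}`, and by linearity the exactness identity for the blocks
`Aʲ q` extends to `P(p(A) q) = ∑ᵢ (p(T) c)ᵢ Vᵢ` for every `p` of degree `≤ 2m`, where `c` is the
coordinate vector of `q = q_m(A)⁻¹ V̂`. For `p = q_m` the left side is `P(V̂) = V̂ = ‖V̂‖_F V₁`, so
`q_m(T) c = ‖V̂‖_F e₁`, i.e. `c = ‖V̂‖_F q_m(T)⁻¹ e₁`. For `p = pol` the block `pol(A) q` lies in
the span, so it equals its projection, which is the claim.
-/

section Orthonormal

variable {n p s : ℕ} {V : Fin s → Matrix (Fin n) (Fin p) ℝ}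

variable (V) in
noncomputable def Pprojₗ : Matrix (Fin n) (Fin p) ℝ →ₗ[ℝ] Matrix (Fin n) (Fin p) ℝ where
  toFun := Pproj V
  map_add' X Y := by
    simp only [Pproj, finner, Matrix.mul_add, trace_add, add_smul, Finset.sum_add_distrib]
  map_smul' a X := by
    simp only [Pproj, finner, Matrix.mul_smul, trace_smul, smul_eq_mul, mul_smul,
      Finset.smul_sum, RingHom.id_apply]

theorem ne_zero_of_orthonormal (horth : ∀ i j, finner (V i) (V j) = if i = j then 1 else 0)
    (i : Fin s) : V i ≠ 0 := by
  intro h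
  simpa [h, finner] using horth i i

theorem finner_sum_smul_of_orthonormal
    (horth : ∀ i j, finner (V i) (V j) = if i = j then 1 else 0) (a : Fin s → ℝ) (j : Fin s) :
    finner (∑ i, a i • V i) (V j) = a j := by
  simp only [finner, Matrix.mul_sum, Matrix.mul_smul, trace_sum, trace_smul] at horth ⊢
  simp [horth]

theorem linearCombination_injective_of_orthonormal
    (horth : ∀ i j, finner (V i) (V j) = if i = j then 1 else 0) :
    Function.Injective (Fintype.linearCombination ℝ V) := by
  intro a b hab
  ext j
  rw [← finner_sum_smul_of_orthonormal horth a j, ← finner_sum_smul_of_orthonormal horth b j]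
  simp only [Fintype.linearCombination_apply] at hab
  rw [hab]

theorem Pproj_eq_self_of_mem_span
    (horth : ∀ i j, finner (V i) (V j) = if i = j then 1 else 0)
    {X : Matrix (Fin n) (Fin p) ℝ} (hX : X ∈ Submodule.span ℝ (Set.range V)) :
    Pproj V X = X := by
  refine LinearMap.eqOn_span (f := Pprojₗ V) (g := LinearMap.id) ?_ hX
  rintro _ ⟨j, rfl⟩
  show Pproj V (V j) = V j
  simp [Pproj, horth]

end Orthonormal

section Polynomial

variable {n p s : ℕ} (A : Matrix (Fin n) (Fin n) ℝ) (q : Matrix (Fin n) (Fin p) ℝ) {N : ℕ}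
  {P : ℝ[X]}

theorem aeval_mul_mem_of_pow_mul_mem {S : Submodule ℝ (Matrix (Fin n) (Fin p) ℝ)}
    (h : ∀ j ≤ N, A ^ j * q ∈ S) (hP : P.natDegree ≤ N) : aeval A P * q ∈ S := by
  rw [aeval_eq_sum_range, Matrix.sum_mul]
  refine Submodule.sum_mem _ fun k hk => ?_
  rw [Matrix.smul_mul]
  exact S.smul_mem _ (h k (by grind))

theorem Pproj_aeval_mul_of_pow {V : Fin s → Matrix (Fin n) (Fin p) ℝ}
    {T : Matrix (Fin s) (Fin s) ℝ} {c : Fin s → ℝ}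
    (h : ∀ j ≤ N, Pproj V (A ^ j * q) = ∑ i, ((T ^ j) *ᵥ c) i • V i) (hP : P.natDegree ≤ N) :
    Pproj V (aeval A P * q) = ∑ i, (aeval T P *ᵥ c) i • V i := by
  simp only [← Fintype.linearCombination_apply] at h ⊢
  change Pprojₗ V _ = _
  simp only [aeval_eq_sum_range, Matrix.sum_mul, Matrix.sum_mulVec, Matrix.smul_mul,
    Matrix.smul_mulVec, map_sum, map_smul]
  refine Finset.sum_congr rfl fun k hk => ?_
  rw [← h k (by grind)]
  rfl

end Polynomial

theorem aeval_nodal_univ {K R : Type*} [CommRing K] [Ring R] [Algebra K R] {m : ℕ}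
    (ss : Fin m → K) (B : R) :
    aeval B (Lagrange.nodal Finset.univ ss) = (List.ofFn fun i => B - ss i • 1).prod := by
  rw [Lagrange.nodal, ← List.prod_ofFn, map_list_prod, List.map_ofFn]
  congr 1
  ext i
  simp [Algebra.algebraMap_eq_smul_one]

/-- exactness of the global extended-rational Arnoldi approximation:
for every rational function `r(z) = pol(z)/q_m(z)` with `deg pol ≤ 2m−1`,
`r(A) V̂ = ‖V̂‖_F · V(r(T) e₁ ⊗ I_p)`. -/
theorem rational_exactness {n p m : ℕ} (hm : 0 < m)
    (A : Matrix (Fin n) (Fin n) ℝ) (ss : Fin m → ℝ)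
    (T : Matrix (Fin (2 * m)) (Fin (2 * m)) ℝ)
    (hAinv : IsUnit ((List.ofFn fun i : Fin m => A - ss i • 1).prod))
    (hTinv : IsUnit ((List.ofFn fun i : Fin m => T - ss i • 1).prod))
    (V : Fin (2 * m) → Matrix (Fin n) (Fin p) ℝ)
    (horth : ∀ i j, finner (V i) (V j) = if i = j then 1 else 0)
    (Vhat : Matrix (Fin n) (Fin p) ℝ)
    (hV1 : V ⟨0, by omega⟩ = (fnorm Vhat)⁻¹ • Vhat)
    (q : Matrix (Fin n) (Fin p) ℝ)
    (hq : q = ((List.ofFn fun i : Fin m => A - ss i • 1).prod)⁻¹ * Vhat)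
    (hmemj : ∀ j ≤ 2 * m - 1, (A ^ j * q) ∈ Submodule.span ℝ (Set.range V))
    (hexact : ∀ j ≤ 2 * m,
      Pproj V (A ^ j * q) = ∑ i, ((T ^ j).mulVec (fun i => finner q (V i))) i • V i)
    (pol : Polynomial ℝ) (hpol : pol.natDegree ≤ 2 * m - 1) :
    (Polynomial.aeval A pol) * ((List.ofFn fun i : Fin m => A - ss i • 1).prod)⁻¹ * Vhat =
      fnorm Vhat •
        ∑ i, (((Polynomial.aeval T pol) *
            ((List.ofFn fun i : Fin m => T - ss i • 1).prod)⁻¹).mulVec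
              (Pi.single ⟨0, by omega⟩ 1)) i • V i := by
  set e₁ : Fin (2 * m) → ℝ := Pi.single ⟨0, by omega⟩ 1
  set c : Fin (2 * m) → ℝ := fun i => finner q (V i)
  have hfnorm : fnorm Vhat ≠ 0 := fun h =>
    ne_zero_of_orthonormal horth _ (by rw [hV1, h, _root_.inv_zero, zero_smul])
  have hVhat : Vhat = fnorm Vhat • V ⟨0, by omega⟩ := (inv_smul_eq_iff₀ hfnorm).mp hV1.symm
  have hqm_q : aeval A (Lagrange.nodal Finset.univ ss) * q = Vhat := by
    rw [aeval_nodal_univ, hq, ← Matrix.mul_assoc,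
      mul_nonsing_inv _ ((isUnit_iff_isUnit_det _).mp hAinv), Matrix.one_mul]
  have hqm_c : (List.ofFn fun i => T - ss i • 1).prod *ᵥ c = fnorm Vhat • e₁ := by
    apply linearCombination_injective_of_orthonormal horth
    have hdeg : (Lagrange.nodal Finset.univ ss).natDegree ≤ 2 * m := by
      rw [Lagrange.natDegree_nodal, Finset.card_univ, Fintype.card_fin]; omega
    have hmem : Vhat ∈ Submodule.span ℝ (Set.range V) :=
      hVhat ▸ Submodule.smul_mem _ _ (Submodule.subset_span ⟨_, rfl⟩)
    rw [map_smul, Fintype.linearCombination_apply_single, one_smul, ← hVhat,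
      Fintype.linearCombination_apply, ← aeval_nodal_univ,
      ← Pproj_aeval_mul_of_pow A q hexact hdeg, hqm_q, Pproj_eq_self_of_mem_span horth hmem]
  have hc : c = fnorm Vhat • (List.ofFn fun i => T - ss i • 1).prod⁻¹ *ᵥ e₁ := by
    rw [← mulVec_smul, ← hqm_c, mulVec_mulVec,
      nonsing_inv_mul _ ((isUnit_iff_isUnit_det _).mp hTinv), one_mulVec]
  rw [Matrix.mul_assoc, ← hq,
    ← Pproj_eq_self_of_mem_span horth (aeval_mul_mem_of_pow_mul_mem A q hmemj hpol),
    Pproj_aeval_mul_of_pow A q hexact (by omega), hc, Finset.smul_sum]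
  simp only [mulVec_smul, mulVec_mulVec, Pi.smul_apply, smul_eq_mul, mul_smul]
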